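/- Under the projector hypotheses, the 4-tensor T = ρ[((n−2)(n−3)/2)(g⊙g) + (P⊙P) − (n−3)(g⊙P)] satisfies the full-trace identity (T·T·T)_{μν}{}^{μν} = 8(n−1)(n−2)(n−3)[(n−2)(n−3)(n−4)+2]·ρ³. -/

import Mathlib

/-!
The Kulkarni–Nomizu products contract as
`(A⊙B)·(C⊙D) = 2 (A·C)⊙(B·D) + 2 (A·D)⊙(B·C)`. For complementary projectors `g`, `P`
(`g·g = g`, `P·P = P`, `g·P = P·g = 0`) this makes `g⊙g`, `P⊙P`, `g⊙P` orthogonal under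
contraction, with squares `4 g⊙g`, `4 P⊙P`, `2 g⊙P`. Hence `T = a g⊙g + b P⊙P + c g⊙P`
has `T·T·T = 16a³ g⊙g + 16b³ P⊙P + 4c³ g⊙P`, and the full trace
`(A⊙B)_{μν}{}^{μν} = 2 tr A tr B − tr(A·B) − tr(B·A)` turns this into a polynomial in
`tr g = 2` and `tr P = n − 2`.
-/

open Finset

variable {ι : Type*} [Fintype ι] [DecidableEq ι]

/-- Kulkarni–Nomizu product of two 2-tensors:
`(A⊙B)_{μνλκ} = A_{μλ}B_{νκ} − A_{νλ}B_{μκ} − A_{μκ}B_{νλ} + A_{νκ}B_{μλ}`. -/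
def KN (A B : ι → ι → ℝ) : ι → ι → ι → ι → ℝ :=
  fun μ ν l κ => A μ l * B ν κ - A ν l * B μ κ - A μ κ * B ν l + A ν κ * B μ l

/-- Contraction of two 2-tensors via the inverse metric:
`(A·B)_{μκ} = Σ_{ν,λ} A_{μν}(Ḡ⁻¹)_{νλ}B_{λκ}`. -/
def dot2 (Ginv : ι → ι → ℝ) (A B : ι → ι → ℝ) : ι → ι → ℝ :=
  fun μ κ => ∑ ν, ∑ l, A μ ν * Ginv ν l * B l κ

/-- Contraction of two 4-tensors via the inverse metric:
`(R·S)_{μνλκ} = Σ R_{μνστ}(Ḡ⁻¹)_{σσ'}(Ḡ⁻¹)_{ττ'}S_{σ'τ'λκ}`. -/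
def dot4 (Ginv : ι → ι → ℝ) (R S : ι → ι → ι → ι → ℝ) : ι → ι → ι → ι → ℝ :=
  fun μ ν l κ => ∑ σ, ∑ τ, ∑ σ', ∑ τ', R μ ν σ τ * Ginv σ σ' * Ginv τ τ' * S σ' τ' l κ

/-- Trace of a 2-tensor: `tr A = Σ_{μ,ν} (Ḡ⁻¹)_{μν}A_{νμ}`. -/
def tr2 (Ginv : ι → ι → ℝ) (A : ι → ι → ℝ) : ℝ :=
  ∑ μ, ∑ ν, Ginv μ ν * A ν μ

/-- Partial trace of a 4-tensor: `R_{μν}{}^ν{}_κ = Σ_{ν,ν'} (Ḡ⁻¹)_{νν'} R_{μνν'κ}`. -/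
def ptr4 (Ginv : ι → ι → ℝ) (R : ι → ι → ι → ι → ℝ) : ι → ι → ℝ :=
  fun μ κ => ∑ ν, ∑ ν', Ginv ν ν' * R μ ν ν' κ

/-- Full trace of a 4-tensor: `R_{μν}{}^{μν} = Σ (Ḡ⁻¹)_{μμ'}(Ḡ⁻¹)_{νν'} R_{μνμ'ν'}`. -/
def ftr4 (Ginv : ι → ι → ℝ) (R : ι → ι → ι → ι → ℝ) : ℝ :=
  ∑ μ, ∑ μ', ∑ ν, ∑ ν', Ginv μ μ' * Ginv ν ν' * R μ ν μ' ν'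

/-- The curvature 4-tensor of a generalized Schwarzschild–Tangherlini geometry,
`T = ρ[((n−2)(n−3)/2)(g⊙g) + (P⊙P) − (n−3)(g⊙P)]`. -/
noncomputable def Tgst (n : ℕ) (ρ : ℝ) (g P : ι → ι → ℝ) : ι → ι → ι → ι → ℝ :=
  fun μ ν l κ => ρ * (((n : ℝ) - 2) * ((n : ℝ) - 3) / 2 * KN g g μ ν l κ
    + KN P P μ ν l κ - ((n : ℝ) - 3) * KN g P μ ν l κ)

section KulkarniNomizu

variable {ι : Type*}

lemma KN_zero_left (B : ι → ι → ℝ) : KN (0 : ι → ι → ℝ) B = 0 := by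
  ext; simp [KN]

lemma KN_zero_right (A : ι → ι → ℝ) : KN A (0 : ι → ι → ℝ) = 0 := by
  ext; simp [KN]

lemma KN_antisymm_left (A B : ι → ι → ℝ) (σ τ l κ : ι) :
    KN A B τ σ l κ = -KN A B σ τ l κ := by
  simp only [KN]; ring

end KulkarniNomizu

section Contraction

variable {ι : Type*} [Fintype ι] (G : ι → ι → ℝ)

lemma symm_of_mul_eq_one [DecidableEq ι] {Gbar : ι → ι → ℝ}
    (hGbar : ∀ μ ν, Gbar μ ν = Gbar ν μ)
    (hinv : ∀ μ l, ∑ ν, Gbar μ ν * G ν l = if μ = l then (1 : ℝ) else 0) (μ ν : ι) :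
    G μ ν = G ν μ := by
  have hmul : Matrix.of Gbar * Matrix.of G = 1 := by
    ext μ l
    simpa [Matrix.mul_apply, Matrix.one_apply] using hinv μ l
  have hsymm : (Matrix.of Gbar).transpose = Matrix.of Gbar := by
    ext μ ν
    exact hGbar ν μ
  have := congrFun (congrFun (congrArg Matrix.transpose (Matrix.inv_eq_right_inv hmul)) μ) ν
  rwa [Matrix.transpose_nonsing_inv, hsymm, Matrix.inv_eq_right_inv hmul] at this

lemma dot2_apply_comm (hG : ∀ μ ν, G μ ν = G ν μ) {A B : ι → ι → ℝ}
    (hA : ∀ μ ν, A μ ν = A ν μ) (hB : ∀ μ ν, B μ ν = B ν μ) (μ ν : ι) :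
    dot2 G A B μ ν = dot2 G B A ν μ := by
  rw [dot2, dot2, Finset.sum_comm]
  refine Finset.sum_congr rfl fun a _ => Finset.sum_congr rfl fun b _ => ?_
  rw [hA μ b, hB a ν, hG b a]
  ring

lemma tr2_zero : tr2 G 0 = 0 := by
  simp [tr2]

lemma dot4_add_left (R R' S : ι → ι → ι → ι → ℝ) :
    dot4 G (R + R') S = dot4 G R S + dot4 G R' S := by
  ext; simp only [dot4, Pi.add_apply, add_mul, Finset.sum_add_distrib]

lemma dot4_add_right (R S S' : ι → ι → ι → ι → ℝ) :
    dot4 G R (S + S') = dot4 G R S + dot4 G R S' := by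
  ext; simp only [dot4, Pi.add_apply, mul_add, Finset.sum_add_distrib]

lemma dot4_smul_left (c : ℝ) (R S : ι → ι → ι → ι → ℝ) :
    dot4 G (c • R) S = c • dot4 G R S := by
  ext; simp only [dot4, Pi.smul_apply, smul_eq_mul, Finset.mul_sum, mul_assoc]

lemma dot4_smul_right (c : ℝ) (R S : ι → ι → ι → ι → ℝ) :
    dot4 G R (c • S) = c • dot4 G R S := by
  ext; simp only [dot4, Pi.smul_apply, smul_eq_mul, Finset.mul_sum]
  congr! 4; ring

lemma ftr4_add (R R' : ι → ι → ι → ι → ℝ) : ftr4 G (R + R') = ftr4 G R + ftr4 G R' := by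
  simp only [ftr4, Pi.add_apply, mul_add, Finset.sum_add_distrib]

lemma ftr4_smul (c : ℝ) (R : ι → ι → ι → ι → ℝ) : ftr4 G (c • R) = c * ftr4 G R := by
  simp only [ftr4, Pi.smul_apply, smul_eq_mul, Finset.mul_sum]
  congr! 4; ring

lemma dot4_KN_left_of_antisymm (A B : ι → ι → ℝ) {S : ι → ι → ι → ι → ℝ}
    (hS : ∀ σ τ l κ, S τ σ l κ = -S σ τ l κ) (μ ν l κ : ι) :
    dot4 G (KN A B) S μ ν l κ = 2 * ∑ σ, ∑ τ, ∑ σ', ∑ τ',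
      (A μ σ * B ν τ - A ν σ * B μ τ) * G σ σ' * G τ τ' * S σ' τ' l κ := by
  set O : ι → ι → ℝ := fun σ τ => A μ σ * B ν τ - A ν σ * B μ τ
  have hswap : ∑ σ, ∑ τ, ∑ σ', ∑ τ', O τ σ * G σ σ' * G τ τ' * S σ' τ' l κ
      = -∑ σ, ∑ τ, ∑ σ', ∑ τ', O σ τ * G σ σ' * G τ τ' * S σ' τ' l κ := by
    -- relabel σ ↔ τ and σ' ↔ τ', then use the antisymmetry of `S`
    rw [Finset.sum_comm]
    simp only [← Finset.sum_neg_distrib]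
    refine Finset.sum_congr rfl fun σ _ => Finset.sum_congr rfl fun τ _ => ?_
    rw [Finset.sum_comm]
    refine Finset.sum_congr rfl fun σ' _ => Finset.sum_congr rfl fun τ' _ => ?_
    rw [hS]; ring
  calc dot4 G (KN A B) S μ ν l κ
      = ∑ σ, ∑ τ, ∑ σ', ∑ τ', (O σ τ - O τ σ) * G σ σ' * G τ τ' * S σ' τ' l κ := by
        simp only [dot4, KN, O]; congr! 4; ring
    _ = 2 * ∑ σ, ∑ τ, ∑ σ', ∑ τ', O σ τ * G σ σ' * G τ τ' * S σ' τ' l κ := by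
        simp only [sub_mul, Finset.sum_sub_distrib, hswap]; ring

lemma dot4_KN_KN (A B C D : ι → ι → ℝ) :
    dot4 G (KN A B) (KN C D) =
      (2 : ℝ) • KN (dot2 G A C) (dot2 G B D) + (2 : ℝ) • KN (dot2 G A D) (dot2 G B C) := by
  ext μ ν l κ
  rw [dot4_KN_left_of_antisymm G A B (KN_antisymm_left C D)]
  simp only [Pi.add_apply, Pi.smul_apply, smul_eq_mul, KN, dot2, Finset.sum_mul_sum]
  simp only [Finset.mul_sum, ← Finset.sum_add_distrib, ← Finset.sum_sub_distrib]
  congr! 4; ring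

lemma ftr4_KN {A B : ι → ι → ℝ} (hA : ∀ μ ν, A μ ν = A ν μ) (hB : ∀ μ ν, B μ ν = B ν μ) :
    ftr4 G (KN A B) =
      2 * (tr2 G A * tr2 G B) - tr2 G (dot2 G A B) - tr2 G (dot2 G B A) := by
  rw [two_mul]
  nth_rw 2 [mul_comm]
  simp only [ftr4, KN, tr2, dot2, Finset.sum_mul]
  simp only [Finset.mul_sum, ← Finset.sum_add_distrib, ← Finset.sum_sub_distrib]
  congr! 4 with μ - μ' - ν - ν' -
  rw [hA μ' μ, hA ν' ν, hA μ' ν, hA ν' μ, hB μ' μ, hB ν' ν, hB μ' ν, hB ν' μ]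
  ring

end Contraction

section ProjectorPair

variable {ι : Type*} [Fintype ι]

noncomputable def knComb (g P : ι → ι → ℝ) (a b c : ℝ) : ι → ι → ι → ι → ℝ :=
  a • KN g g + b • KN P P + c • KN g P

variable {G g P : ι → ι → ℝ}

lemma dot4_knComb (hgg : dot2 G g g = g) (hPP : dot2 G P P = P) (hgP : dot2 G g P = 0)
    (hPg : dot2 G P g = 0) (a b c a' b' c' : ℝ) :
    dot4 G (knComb g P a b c) (knComb g P a' b' c') =
      knComb g P (4 * a * a') (4 * b * b') (2 * c * c') := by
  simp only [knComb, dot4_add_left, dot4_add_right, dot4_smul_left, dot4_smul_right, dot4_KN_KN,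
    hgg, hPP, hgP, hPg, KN_zero_left, KN_zero_right, smul_zero, add_zero, zero_add]
  module

lemma ftr4_knComb (hg : ∀ μ ν, g μ ν = g ν μ) (hP : ∀ μ ν, P μ ν = P ν μ)
    (hgg : dot2 G g g = g) (hPP : dot2 G P P = P) (hgP : dot2 G g P = 0)
    (hPg : dot2 G P g = 0) (a b c : ℝ) :
    ftr4 G (knComb g P a b c) =
      2 * (a * (tr2 G g ^ 2 - tr2 G g) + b * (tr2 G P ^ 2 - tr2 G P) + c * tr2 G g * tr2 G P) := by
  simp only [knComb, ftr4_add, ftr4_smul, ftr4_KN G hg hg, ftr4_KN G hP hP, ftr4_KN G hg hP,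
    hgg, hPP, hgP, hPg, tr2_zero]
  ring

end ProjectorPair

theorem Tgst_cube_full_trace_general {n : ℕ}
    (Gbar Ginv g P : ι → ι → ℝ) (ρ : ℝ)
    (hGsymm : ∀ μ ν, Gbar μ ν = Gbar ν μ)
    (hGinv : ∀ μ l, ∑ ν, Gbar μ ν * Ginv ν l = if μ = l then (1 : ℝ) else 0)
    (hgsymm : ∀ μ ν, g μ ν = g ν μ) (hPsymm : ∀ μ ν, P μ ν = P ν μ)
    (hgg : ∀ μ ν, dot2 Ginv g g μ ν = g μ ν)
    (hPP : ∀ μ ν, dot2 Ginv P P μ ν = P μ ν)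
    (hgP : ∀ μ ν, dot2 Ginv g P μ ν = 0)
    (htrg : tr2 Ginv g = 2)
    (htrP : tr2 Ginv P = (n : ℝ) - 2)
    :
    ftr4 Ginv (dot4 Ginv (dot4 Ginv (Tgst n ρ g P) (Tgst n ρ g P)) (Tgst n ρ g P)) =
      8 * ((n : ℝ) - 1) * ((n : ℝ) - 2) * ((n : ℝ) - 3)
        * (((n : ℝ) - 2) * ((n : ℝ) - 3) * ((n : ℝ) - 4) + 2) * ρ ^ 3 := by
  have hGinv_symm := symm_of_mul_eq_one Ginv hGsymm hGinv
  have hPg : dot2 Ginv P g = 0 := funext₂ fun μ ν =>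
    (dot2_apply_comm Ginv hGinv_symm hPsymm hgsymm μ ν).trans (hgP ν μ)
  replace hgg : dot2 Ginv g g = g := funext₂ hgg
  replace hPP : dot2 Ginv P P = P := funext₂ hPP
  replace hgP : dot2 Ginv g P = 0 := funext₂ hgP
  have hT : Tgst n ρ g P =
      knComb g P (ρ * (((n : ℝ) - 2) * ((n : ℝ) - 3) / 2)) ρ (-(ρ * ((n : ℝ) - 3))) := by
    ext μ ν l κ
    simp only [Tgst, knComb, Pi.add_apply, Pi.smul_apply, smul_eq_mul]
    ring
  rw [hT, dot4_knComb hgg hPP hgP hPg, dot4_knComb hgg hPP hgP hPg,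
    ftr4_knComb hgsymm hPsymm hgg hPP hgP hPg, htrg, htrP]
  ring

/-- Under the projector hypotheses,
`(T·T·T)_{μν}{}^{μν} = 8(n−1)(n−2)(n−3)[(n−2)(n−3)(n−4)+2]·ρ³`. -/
theorem Tgst_cube_full_trace {n : ℕ} (hn : 4 ≤ n) (hcard : Fintype.card ι = n)
    (Gbar Ginv g P : ι → ι → ℝ) (ρ : ℝ)
    (hGsymm : ∀ μ ν, Gbar μ ν = Gbar ν μ)
    (hGinv : ∀ μ l, ∑ ν, Gbar μ ν * Ginv ν l = if μ = l then (1 : ℝ) else 0)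
    (hsplit : ∀ μ ν, Gbar μ ν = g μ ν + P μ ν)
    (hgsymm : ∀ μ ν, g μ ν = g ν μ) (hPsymm : ∀ μ ν, P μ ν = P ν μ)
    (hgg : ∀ μ ν, dot2 Ginv g g μ ν = g μ ν)
    (hPP : ∀ μ ν, dot2 Ginv P P μ ν = P μ ν)
    (hgP : ∀ μ ν, dot2 Ginv g P μ ν = 0)
    (htrg : tr2 Ginv g = 2)
    (htrP : tr2 Ginv P = (n : ℝ) - 2)
    :
    ftr4 Ginv (dot4 Ginv (dot4 Ginv (Tgst n ρ g P) (Tgst n ρ g P)) (Tgst n ρ g P)) =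
      8 * ((n : ℝ) - 1) * ((n : ℝ) - 2) * ((n : ℝ) - 3)
        * (((n : ℝ) - 2) * ((n : ℝ) - 3) * ((n : ℝ) - 4) + 2) * ρ ^ 3 :=
  Tgst_cube_full_trace_general Gbar Ginv g P ρ hGsymm hGinv hgsymm hPsymm hgg hPP hgP htrg htrP
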